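/- arXiv:2212.00415 — 2 statements merged into one kernel-verified Lean document; each statement's English description precedes it below -/
import Mathlib

section
/- The algebra W(2)-bar does not satisfy the identity st^4_1: there exist a,b,c,d in W(2)-bar with Σ_{σ∈S_4} sgn(σ) (((x_{σ(1)}x_{σ(2)})x_{σ(3)})x_{σ(4)}) nonzero at (a,b,c,d). -/
def tbl (F : Type*) [Field F] : Fin 8 → Fin 8 → Fin 8 → F :=
  ![![![-1, 0, 0, 0, 0, 0, 0, 0], ![0, -3, 0, 0, 0, 0, 0, 0], ![0, 0, 1, 0, 0, 0, 0, 0], ![0, 0, 0, 3, 0, 0, 0, 0], ![0, 0, 0, 0, -1, 0, 0, 0], ![0, 0, 0, 0, 0, 1, 0, 0], ![0, 0, 0, 0, 0, 0, 1, 0], ![0, 0, 0, 0, 0, 0, 0, -1]],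
    ![![0, 3, 0, 0, 0, 0, 0, 0], ![0, 0, 0, 0, 0, 0, 0, 0], ![0, 0, 0, 0, 0, 0, 0, 0], ![0, 0, 0, 0, 0, 0, 0, 0], ![0, 0, 0, 0, 0, 0, 0, 0], ![0, 0, 0, 0, 0, 0, 0, 0], ![0, 0, 0, 0, 0, 0, 0, 0], ![0, 0, 0, 0, 0, 0, 0, 0]],
    ![![0, 0, -2, 0, 0, 0, 0, 0], ![0, 0, 0, 0, 0, 0, 0, 0], ![0, 0, 0, -3, 0, 0, 0, 0], ![0, 0, 0, 0, 0, 0, 0, 0], ![0, 0, 0, 0, 0, 1, 0, 0], ![0, 0, 0, 0, 0, 0, 0, 0], ![0, 0, 0, 0, 0, 0, 0, 0], ![0, 0, 0, 0, 0, 0, -1, 0]],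
    ![![0, 0, 0, 0, 0, 0, 0, 0], ![0, 0, 0, 0, 0, 0, 0, 0], ![0, 0, 0, 0, 0, 0, 0, 0], ![0, 0, 0, 0, 0, 0, 0, 0], ![0, 0, 0, 0, 0, 0, 0, 0], ![0, 0, 0, 0, 0, 0, 0, 0], ![0, 0, 0, 0, 0, 0, 0, 0], ![0, 0, 0, 0, 0, 0, 0, 0]],
    ![![-2, 0, 0, 0, 0, 0, 0, 0], ![0, -3, 0, 0, 0, 0, 0, 0], ![0, 0, -1, 0, 0, 0, 0, 0], ![0, 0, 0, 0, 0, 0, 0, 0], ![0, 0, 0, 0, -2, 0, 0, 0], ![0, 0, 0, 0, 0, -1, 0, 0], ![0, 0, 0, 0, 0, 0, -1, 0], ![0, 0, 0, 0, 0, 0, 0, -2]],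
    ![![0, 0, 2, 0, 0, 0, 0, 0], ![0, 0, 0, 0, 0, 0, 0, 0], ![0, 0, 0, 3, 0, 0, 0, 0], ![0, 0, 0, 0, 0, 0, 0, 0], ![0, 0, 0, 0, 0, -1, 0, 0], ![0, 0, 0, 0, 0, 0, 0, 0], ![0, 0, 0, 0, 0, 0, 0, 0], ![0, 0, 0, 0, 0, 0, 1, 0]],
    ![![0, 0, 2, 0, 0, 0, 0, 0], ![0, 0, 0, 0, 0, 0, 0, 0], ![0, 0, 0, 3, 0, 0, 0, 0], ![0, 0, 0, 0, 0, 0, 0, 0], ![0, 0, 0, 0, 0, -1, 0, 0], ![0, 0, 0, 0, 0, 0, 0, 0], ![0, 0, 0, 0, 0, 0, 0, 0], ![0, 0, 0, 0, 0, 0, 1, 0]],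
    ![![0, 0, 0, 0, 0, 0, 0, 0], ![0, 1, 0, 0, 0, 0, 0, 0], ![0, 0, -1, 0, 0, 0, 0, 0], ![0, 0, 0, -2, 0, 0, 0, 0], ![0, 0, 0, 0, 0, 0, 0, 0], ![0, 0, 0, 0, 0, -1, 0, 0], ![0, 0, 0, 0, 0, 0, -1, 0], ![0, 0, 0, 0, 0, 0, 0, 0]]]

def mul (F : Type*) [Field F] (x y : Fin 8 → F) : Fin 8 → F :=
  fun k => ∑ i, ∑ j, x i * y j * tbl F i j k

/-!
Index `k : Fin 8` stands for `e_(k+1)`. For all `x y`, the `e₁, e₅, e₈`-coordinates of `x y` are `chi x`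
times those of `y`, and its `e₂`-coordinate is `leftScalar x * y₂ + x₂ * rightScalar y`. Hence `chi` is
multiplicative, `leftScalar (x y) = chi x * leftScalar y`, and the `e₂`-coordinate of `((a b) c) d` is a
short polynomial in these functionals and the `e₂`-coordinates of `a, b, c, d`. At `(e₁, e₂, e₅, e₈)` the
terms of `st⁴₁` from `((e₁ e₅) e₈) e₂` and `((e₅ e₁) e₈) e₂` cancel, and the only other nonzero one is
`((e₅ e₈) e₂) e₁ = -6 e₂`, of odd sign.
-/

namespace W2bar

variable {F : Type*} [Field F]

def chi (x : Fin 8 → F) : F := -x 0 - 2 * x 4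

def leftScalar (x : Fin 8 → F) : F := -3 * x 0 - 3 * x 4 + x 7

def rightScalar (y : Fin 8 → F) : F := 3 * y 0

theorem mul_apply_one (x y : Fin 8 → F) :
    mul F x y 1 = leftScalar x * y 1 + x 1 * rightScalar y := by
  simp only [mul, tbl, leftScalar, rightScalar, Fin.sum_univ_eight, Matrix.cons_val]
  ring

theorem chi_mul (x y : Fin 8 → F) : chi (mul F x y) = chi x * chi y := by
  simp only [mul, tbl, chi, Fin.sum_univ_eight, Matrix.cons_val]
  ring

theorem leftScalar_mul (x y : Fin 8 → F) :
    leftScalar (mul F x y) = chi x * leftScalar y := by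
  simp only [mul, tbl, chi, leftScalar, Fin.sum_univ_eight, Matrix.cons_val]
  ring

theorem mul_mul_mul_apply_one (a b c d : Fin 8 → F) :
    mul F (mul F (mul F a b) c) d 1 =
      chi a * chi b * leftScalar c * d 1 + chi a * leftScalar b * c 1 * rightScalar d
        + leftScalar a * b 1 * rightScalar c * rightScalar d
        + a 1 * rightScalar b * rightScalar c * rightScalar d := by
  simp only [mul_apply_one, leftScalar_mul, chi_mul]
  ring

def st4₁ (x : Fin 4 → Fin 8 → F) : Fin 8 → F :=
  ∑ σ : Equiv.Perm (Fin 4), (Equiv.Perm.sign σ : ℤ) •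
    mul F (mul F (mul F (x (σ 0)) (x (σ 1))) (x (σ 2))) (x (σ 3))

def witness : Fin 4 → Fin 8 → F :=
  ![Pi.single 0 1, Pi.single 1 1, Pi.single 4 1, Pi.single 7 1]

theorem chi_witness (i : Fin 4) :
    chi (witness i : Fin 8 → F) = ((![-1, 0, -2, 0] : Fin 4 → ℤ) i : F) := by
  fin_cases i <;> simp [chi, witness]

theorem leftScalar_witness (i : Fin 4) :
    leftScalar (witness i : Fin 8 → F) = ((![-3, 0, -3, 1] : Fin 4 → ℤ) i : F) := by
  fin_cases i <;> simp [leftScalar, witness]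

theorem rightScalar_witness (i : Fin 4) :
    rightScalar (witness i : Fin 8 → F) = ((![3, 0, 0, 0] : Fin 4 → ℤ) i : F) := by
  fin_cases i <;> simp [rightScalar, witness]

theorem witness_apply_one (i : Fin 4) :
    (witness i : Fin 8 → F) 1 = ((![0, 1, 0, 0] : Fin 4 → ℤ) i : F) := by
  fin_cases i <;> simp [witness]

theorem st4₁_witness_apply_one : st4₁ (witness : Fin 4 → Fin 8 → F) 1 = 6 := by
  have key : ∑ σ : Equiv.Perm (Fin 4), (Equiv.Perm.sign σ : ℤ) *
      (![-1, 0, -2, 0] (σ 0) * ![-1, 0, -2, 0] (σ 1) * ![-3, 0, -3, 1] (σ 2) * ![0, 1, 0, 0] (σ 3)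
        + ![-1, 0, -2, 0] (σ 0) * ![-3, 0, -3, 1] (σ 1) * ![0, 1, 0, 0] (σ 2) * ![3, 0, 0, 0] (σ 3)
        + ![-3, 0, -3, 1] (σ 0) * ![0, 1, 0, 0] (σ 1) * ![3, 0, 0, 0] (σ 2) * ![3, 0, 0, 0] (σ 3)
        + ![0, 1, 0, 0] (σ 0) * ![3, 0, 0, 0] (σ 1) * ![3, 0, 0, 0] (σ 2) * ![3, 0, 0, 0] (σ 3)) = 6 := by
    decide
  have := congrArg (Int.cast : ℤ → F) key
  push_cast at this
  simpa only [st4₁, Finset.sum_apply, zsmul_eq_mul, Pi.mul_apply, Pi.intCast_apply,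
    mul_mul_mul_apply_one, chi_witness, leftScalar_witness, rightScalar_witness, witness_apply_one] using this

end W2bar

/-- `W(2)`-bar does not satisfy the identity `st⁴₁`. -/
theorem W2bar_not_satisfies_st4_1 (F : Type*) [Field F] [CharZero F] :
    ∃ x : Fin 4 → (Fin 8 → F),
      ∑ σ : Equiv.Perm (Fin 4), (Equiv.Perm.sign σ : ℤ) •
        mul F (mul F (mul F (x (σ 0)) (x (σ 1))) (x (σ 2))) (x (σ 3)) ≠ 0 := by
  refine ⟨W2bar.witness, fun h => ?_⟩
  have : (6 : F) = 0 := W2bar.st4₁_witness_apply_one.symm.trans (congrFun h 1)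
  norm_num at this
end

section
/- For every α, β in F, the subspace of W(2)-bar spanned by e_1+αe_8, e_2, e_3, e_4, e_5+βe_8, e_6, e_7 is closed under multiplication, i.e. is a 7-dimensional subalgebra. -/
/-- `e₁ + αe₈, e₂, e₃, e₄, e₅ + βe₈, e₆, e₇`, where `eᵢ = Pi.single (i - 1) 1`. -/
def sabGenerators {R : Type*} [CommRing R] (α β : R) : Set (Fin 8 → R) :=
  {Pi.single 0 1 + α • Pi.single 7 1, Pi.single 1 1, Pi.single 2 1, Pi.single 3 1,
    Pi.single 4 1 + β • Pi.single 7 1, Pi.single 5 1, Pi.single 6 1}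

lemma mem_span_sabGenerators_iff {R : Type*} [CommRing R] (α β : R) (v : Fin 8 → R) :
    v ∈ Submodule.span R (sabGenerators α β) ↔ v 7 = α * v 0 + β * v 4 := by
  constructor
  · intro hv
    let φ : (Fin 8 → R) →ₗ[R] R :=
      LinearMap.proj 7 - α • LinearMap.proj 0 - β • LinearMap.proj 4
    have hle : Submodule.span R (sabGenerators α β) ≤ LinearMap.ker φ := by
      rw [Submodule.span_le]
      rintro w (rfl | rfl | rfl | rfl | rfl | rfl | rfl) <;> simp [φ]
    have hφ : φ v = 0 := hle hv
    simp only [φ, LinearMap.sub_apply, LinearMap.smul_apply, LinearMap.coe_proj,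
      Function.eval, smul_eq_mul] at hφ
    linear_combination hφ
  · intro h
    have hv : v = v 0 • (Pi.single 0 1 + α • Pi.single 7 1) + v 1 • Pi.single 1 1
        + v 2 • Pi.single 2 1 + v 3 • Pi.single 3 1 + v 4 • (Pi.single 4 1 + β • Pi.single 7 1)
        + v 5 • Pi.single 5 1 + v 6 • Pi.single 6 1 := by
      funext k
      fin_cases k <;> simp [h, mul_comm]
    rw [hv]
    refine add_mem (add_mem (add_mem (add_mem (add_mem (add_mem ?_ ?_) ?_) ?_) ?_) ?_) ?_ <;>
      exact Submodule.smul_mem _ _ (Submodule.subset_span (by simp [sabGenerators]))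

lemma mul_apply_eq_neg_mul {F : Type*} [Field F] (x y : Fin 8 → F) {k : Fin 8}
    (hk : k = 0 ∨ k = 4 ∨ k = 7) : mul F x y k = -(x 0 + 2 * x 4) * y k := by
  rcases hk with rfl | rfl | rfl <;> simp [mul, tbl, Fin.sum_univ_eight] <;> ring

theorem W2bar_Sab_subalgebra_general (F : Type*) [Field F] (α β : F) :
    ∀ x ∈ Submodule.span F
        ({(Pi.single 0 1 + α • (Pi.single 7 1 : Fin 8 → F)), Pi.single 1 1, Pi.single 2 1, Pi.single 3 1,
          (Pi.single 4 1 + β • (Pi.single 7 1 : Fin 8 → F)), Pi.single 5 1, Pi.single 6 1} : Set (Fin 8 → F)),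
      ∀ y ∈ Submodule.span F
        ({(Pi.single 0 1 + α • (Pi.single 7 1 : Fin 8 → F)), Pi.single 1 1, Pi.single 2 1, Pi.single 3 1,
          (Pi.single 4 1 + β • (Pi.single 7 1 : Fin 8 → F)), Pi.single 5 1, Pi.single 6 1} : Set (Fin 8 → F)),
        mul F x y ∈ Submodule.span F
        ({(Pi.single 0 1 + α • (Pi.single 7 1 : Fin 8 → F)), Pi.single 1 1, Pi.single 2 1, Pi.single 3 1,
          (Pi.single 4 1 + β • (Pi.single 7 1 : Fin 8 → F)), Pi.single 5 1, Pi.single 6 1} : Set (Fin 8 → F)) := by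
  intro x _ y hy
  have hy7 : y 7 = α * y 0 + β * y 4 := (mem_span_sabGenerators_iff α β y).1 hy
  refine (mem_span_sabGenerators_iff α β (mul F x y)).2 ?_
  simp only [mul_apply_eq_neg_mul x y (k := 0) (by simp), mul_apply_eq_neg_mul x y (k := 4) (by simp),
    mul_apply_eq_neg_mul x y (k := 7) (by simp), hy7]
  ring

/-- For all `α β`, the span of `e₁+αe₈, e₂, e₃, e₄, e₅+βe₈, e₆, e₇` is closed under the
multiplication of `W(2)`-bar. -/
theorem W2bar_Sab_subalgebra (F : Type*) [Field F] [CharZero F] (α β : F) :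
    ∀ x ∈ Submodule.span F
        ({(Pi.single 0 1 + α • (Pi.single 7 1 : Fin 8 → F)), Pi.single 1 1, Pi.single 2 1, Pi.single 3 1,
          (Pi.single 4 1 + β • (Pi.single 7 1 : Fin 8 → F)), Pi.single 5 1, Pi.single 6 1} : Set (Fin 8 → F)),
      ∀ y ∈ Submodule.span F
        ({(Pi.single 0 1 + α • (Pi.single 7 1 : Fin 8 → F)), Pi.single 1 1, Pi.single 2 1, Pi.single 3 1,
          (Pi.single 4 1 + β • (Pi.single 7 1 : Fin 8 → F)), Pi.single 5 1, Pi.single 6 1} : Set (Fin 8 → F)),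
        mul F x y ∈ Submodule.span F
        ({(Pi.single 0 1 + α • (Pi.single 7 1 : Fin 8 → F)), Pi.single 1 1, Pi.single 2 1, Pi.single 3 1,
          (Pi.single 4 1 + β • (Pi.single 7 1 : Fin 8 → F)), Pi.single 5 1, Pi.single 6 1} : Set (Fin 8 → F)) :=
  W2bar_Sab_subalgebra_general F α β
end
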